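/- For a word w of length n over the free Lie ring, the integer c(w) (the nonnegative generator of the ideal {(P,w) : P ∈ L_ℤ(A)} of ℤ) is either zero or equals the greatest common divisor of the nonzero coefficients appearing in the polynomial l*(w). -/

import Mathlib

open MonoidAlgebra

attribute [local instance 100] LieRing.ofAssociativeRing

/-- The word `w` viewed as a monomial in the free associative algebra `K⟨A⟩`. -/
noncomputable def word (K : Type*) [CommRing K] {A : Type*} (w : List A) :
    MonoidAlgebra K (FreeMonoid A) :=
  MonoidAlgebra.single (FreeMonoid.ofList w) 1

/-- The adjoint `l*` of the left-normed Lie bracketing, defined by the recursion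
`l*(ε) = 0`, `l*(a) = a`, `l*(aub) = l*(au)·b − l*(ub)·a`. -/
noncomputable def lstar (K : Type*) [CommRing K] {A : Type*} :
    List A → MonoidAlgebra K (FreeMonoid A)
  | [] => 0
  | [a] => word K [a]
  | a :: b :: r =>
      lstar K (a :: (b :: r).dropLast) * word K [(b :: r).getLast (by simp)]
        - lstar K (b :: r) * word K [a]
  termination_by w => w.length
  decreasing_by
    · simp [List.length_dropLast]
    · simp

/-- The free Lie algebra `L_K(A)`: the Lie subalgebra of `K⟨A⟩` generated by the letters. -/
noncomputable def freeLie (K : Type*) [CommRing K] (A : Type*) :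
    LieSubalgebra K (MonoidAlgebra K (FreeMonoid A)) :=
  LieSubalgebra.lieSpan K _ {P | ∃ a : A, P = word K [a]}

/-!
The span of the left-normed brackets `l(v)` is stable under bracketing with a letter, hence, by
the Jacobi identity, under all brackets; so it is the whole free Lie ring `L_ℤ(A)`. By adjointness
`(l(v), w) = (l*(w), v)`, the ideal `{(P, w) : P ∈ L_ℤ(A)}` is therefore generated by the
coefficients of `l*(w)`, and its nonnegative generator is their gcd.
-/

open FreeMonoid

theorem Finsupp.gcd_support_dvd_apply {α R : Type*} [CommMonoidWithZero R]
    [NormalizedGCDMonoid R] (f : α →₀ R) (x : α) : f.support.gcd f ∣ f x := by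
  by_cases hx : x ∈ f.support
  · exact Finset.gcd_dvd hx
  · rw [Finsupp.notMem_support_iff.mp hx]
    exact dvd_zero _

section

variable {K : Type*} [CommRing K] {A : Type*}

theorem coeff_mul_word_singleton_append [DecidableEq A] (P : MonoidAlgebra K (FreeMonoid A))
    (x d : A) (v : List A) :
    (P * word K [x]).coeff (ofList (v ++ [d])) = if d = x then P.coeff (ofList v) else 0 := by
  split_ifs with h
  · rw [h, ofList_append, word, coeff_mul_single_mul, mul_one]
  · refine coeff_mul_single_of_forall_mul_ne _ _ fun m hm => h ?_
    simpa [eq_comm] using congrArg (fun m => m.toList.getLast?) hm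

theorem coeff_mul_word_singleton_nil (P : MonoidAlgebra K (FreeMonoid A)) (x : A) :
    (P * word K [x]).coeff (ofList []) = 0 :=
  coeff_mul_single_of_forall_mul_ne _ _ fun m hm => by
    simpa using congrArg (fun m => m.toList) hm

theorem coeff_word_singleton_mul_cons [DecidableEq A] (P : MonoidAlgebra K (FreeMonoid A))
    (x d : A) (v : List A) :
    (word K [x] * P).coeff (ofList (d :: v)) = if d = x then P.coeff (ofList v) else 0 := by
  split_ifs with h
  · rw [h, show x :: v = [x] ++ v from rfl, ofList_append, word, coeff_single_mul_mul, one_mul]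
  · refine coeff_single_mul_of_forall_mul_ne _ _ fun m hm => h ?_
    simpa [eq_comm] using congrArg (fun m => m.toList.head?) hm

theorem coeff_word_singleton_mul_nil (P : MonoidAlgebra K (FreeMonoid A)) (x : A) :
    (word K [x] * P).coeff (ofList []) = 0 :=
  coeff_single_mul_of_forall_mul_ne _ _ fun m hm => by
    simpa using congrArg (fun m => m.toList) hm

theorem coeff_word [DecidableEq A] (v w : List A) :
    (word K v).coeff (ofList w) = if v = w then 1 else 0 := by
  classical
  simp [word, Finsupp.single_apply]

theorem lstar_cons_append_singleton (a c : A) (u : List A) :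
    lstar K (a :: (u ++ [c])) =
      lstar K (a :: u) * word K [c] - lstar K (u ++ [c]) * word K [a] := by
  cases u with
  | nil => rw [List.nil_append, lstar.eq_3]; simp
  | cons b r => rw [List.cons_append, lstar]; simp [List.dropLast_cons_of_ne_nil]

theorem coeff_lstar_nil (w : List A) : (lstar K w).coeff (ofList []) = 0 := by
  classical
  rcases w with _ | ⟨a, t⟩
  · simp [lstar]
  rcases t.eq_nil_or_concat with rfl | ⟨u, c, rfl⟩
  · rw [lstar, coeff_word]; simp
  · rw [List.concat_eq_append, lstar_cons_append_singleton, coeff_sub, Finsupp.sub_apply,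
      coeff_mul_word_singleton_nil, coeff_mul_word_singleton_nil, sub_zero]

noncomputable def leftNormedBracket (K : Type*) [CommRing K] {A : Type*} :
    List A → MonoidAlgebra K (FreeMonoid A)
  | [] => 0
  | a :: t => t.foldl (fun P b => ⁅P, word K [b]⁆) (word K [a])

@[simp]
theorem leftNormedBracket_nil : leftNormedBracket K ([] : List A) = 0 := rfl

@[simp]
theorem leftNormedBracket_singleton (a : A) : leftNormedBracket K [a] = word K [a] := rfl

theorem leftNormedBracket_append_singleton {v : List A} (hv : v ≠ []) (d : A) :
    leftNormedBracket K (v ++ [d]) = ⁅leftNormedBracket K v, word K [d]⁆ := by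
  obtain ⟨a, t, rfl⟩ := List.exists_cons_of_ne_nil hv
  simp [leftNormedBracket, List.foldl_append]

theorem coeff_leftNormedBracket_append_singleton {v : List A} (hv : v ≠ []) (d : A)
    (x : FreeMonoid A) :
    (leftNormedBracket K (v ++ [d])).coeff x =
      (leftNormedBracket K v * word K [d]).coeff x -
        (word K [d] * leftNormedBracket K v).coeff x := by
  rw [leftNormedBracket_append_singleton hv, Ring.lie_def, coeff_sub, Finsupp.sub_apply]

theorem coeff_leftNormedBracket_eq_coeff_lstar (v w : List A) :
    (leftNormedBracket K v).coeff (ofList w) = (lstar K w).coeff (ofList v) := by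
  classical
  induction v using List.reverseRecOn generalizing w with
  | nil => rw [coeff_lstar_nil, leftNormedBracket_nil]; rfl
  | append_singleton v d ih =>
    rcases w with _ | ⟨a, t⟩
    · rcases eq_or_ne v [] with rfl | hv
      · rw [List.nil_append, leftNormedBracket_singleton, coeff_word, lstar]; simp
      · rw [coeff_leftNormedBracket_append_singleton hv, coeff_mul_word_singleton_nil,
          coeff_word_singleton_mul_nil, lstar]
        simp
    rcases t.eq_nil_or_concat with rfl | ⟨u, c, rfl⟩
    · rcases eq_or_ne v [] with rfl | hv
      · rw [List.nil_append, leftNormedBracket_singleton, coeff_word, lstar, coeff_word]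
        simp [eq_comm]
      · rw [coeff_leftNormedBracket_append_singleton hv, ← List.nil_append [a],
          coeff_mul_word_singleton_append, List.nil_append, coeff_word_singleton_mul_cons,
          sub_self, lstar, coeff_word]
        simp [eq_comm (a := [a]), List.append_eq_singleton_iff, hv]
    rw [List.concat_eq_append, lstar_cons_append_singleton, coeff_sub, Finsupp.sub_apply,
      coeff_mul_word_singleton_append, coeff_mul_word_singleton_append, ← ih, ← ih]
    rcases eq_or_ne v [] with rfl | hv
    · rw [List.nil_append, leftNormedBracket_singleton, coeff_word]; simp
    · rw [coeff_leftNormedBracket_append_singleton hv, ← List.cons_append,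
        coeff_mul_word_singleton_append, List.cons_append, coeff_word_singleton_mul_cons]
      simp only [eq_comm]

theorem leftNormedBracket_mem_freeLie (v : List A) : leftNormedBracket K v ∈ freeLie K A := by
  have word_mem (a : A) : word K [a] ∈ freeLie K A := LieSubalgebra.subset_lieSpan ⟨a, rfl⟩
  induction v using List.reverseRecOn with
  | nil => exact (freeLie K A).zero_mem
  | append_singleton v d ih =>
    rcases eq_or_ne v [] with rfl | hv
    · exact word_mem d
    · rw [leftNormedBracket_append_singleton hv]
      exact (freeLie K A).lie_mem ih (word_mem d)

theorem lie_word_mem_span_leftNormedBracket {x : MonoidAlgebra K (FreeMonoid A)}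
    (hx : x ∈ Submodule.span K (Set.range (leftNormedBracket K))) (d : A) :
    ⁅x, word K [d]⁆ ∈ Submodule.span K (Set.range (leftNormedBracket K)) := by
  induction hx using Submodule.span_induction with
  | mem _ h =>
    obtain ⟨v, rfl⟩ := h
    rcases eq_or_ne v [] with rfl | hv
    · simp
    · rw [← leftNormedBracket_append_singleton hv]
      exact Submodule.subset_span ⟨_, rfl⟩
  | zero => simp
  | add _ _ _ _ hx hy => rw [add_lie]; exact add_mem hx hy
  | smul a _ _ hx => rw [smul_lie]; exact Submodule.smul_mem _ a hx

theorem lie_leftNormedBracket_mem_span (u v : List A) :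
    ⁅leftNormedBracket K u, leftNormedBracket K v⁆ ∈
      Submodule.span K (Set.range (leftNormedBracket K)) := by
  induction v using List.reverseRecOn generalizing u with
  | nil => simp
  | append_singleton v d ih =>
    rcases eq_or_ne u [] with rfl | hu
    · simp
    rcases eq_or_ne v [] with rfl | hv
    · rw [List.nil_append, leftNormedBracket_singleton, ← leftNormedBracket_append_singleton hu]
      exact Submodule.subset_span ⟨_, rfl⟩
    -- Jacobi: [l u, [l v, d]] = [[l u, l v], d] - [l (u ++ [d]), l v]
    rw [leftNormedBracket_append_singleton hv, leibniz_lie,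
      ← leftNormedBracket_append_singleton hu, ← lie_skew (leftNormedBracket K v)]
    exact add_mem (lie_word_mem_span_leftNormedBracket (ih u) d) (neg_mem (ih (u ++ [d])))

theorem lie_mem_span_leftNormedBracket {x y : MonoidAlgebra K (FreeMonoid A)}
    (hx : x ∈ Submodule.span K (Set.range (leftNormedBracket K)))
    (hy : y ∈ Submodule.span K (Set.range (leftNormedBracket K))) :
    ⁅x, y⁆ ∈ Submodule.span K (Set.range (leftNormedBracket K)) := by
  let bracket :
      MonoidAlgebra K (FreeMonoid A) →ₗ[K] Module.End K (MonoidAlgebra K (FreeMonoid A)) :=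
    (LieModule.toEnd K _ _).toLinearMap
  have hclosed : Submodule.map₂ bracket (Submodule.span K (Set.range (leftNormedBracket K)))
      (Submodule.span K (Set.range (leftNormedBracket K))) ≤
      Submodule.span K (Set.range (leftNormedBracket K)) := by
    rw [Submodule.map₂_span_span, Submodule.span_le]
    rintro _ ⟨_, ⟨u, rfl⟩, _, ⟨v, rfl⟩, rfl⟩
    exact lie_leftNormedBracket_mem_span u v
  exact hclosed (Submodule.apply_mem_map₂ bracket hx hy)

theorem freeLie_toSubmodule_eq_span_leftNormedBracket :
    (freeLie K A).toSubmodule = Submodule.span K (Set.range (leftNormedBracket K)) := by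
  refine le_antisymm (fun x (hx : x ∈ freeLie K A) => ?_) (Submodule.span_le.mpr ?_)
  · induction hx using LieSubalgebra.lieSpan_induction with
    | mem _ h => obtain ⟨a, rfl⟩ := h; exact Submodule.subset_span ⟨[a], rfl⟩
    | zero => exact zero_mem _
    | add _ _ _ _ ihx ihy => exact add_mem ihx ihy
    | smul a _ _ ihx => exact Submodule.smul_mem _ a ihx
    | lie _ _ _ _ ihx ihy => exact lie_mem_span_leftNormedBracket ihx ihy
  · rintro _ ⟨v, rfl⟩
    exact leftNormedBracket_mem_freeLie v

theorem coeff_mem_span_range_coeff_lstar {Q : MonoidAlgebra K (FreeMonoid A)}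
    (hQ : Q ∈ freeLie K A) (w : List A) :
    Q.coeff (ofList w) ∈ Ideal.span (Set.range (lstar K w).coeff) := by
  rw [← LieSubalgebra.mem_toSubmodule, freeLie_toSubmodule_eq_span_leftNormedBracket] at hQ
  induction hQ using Submodule.span_induction with
  | mem _ h =>
    obtain ⟨v, rfl⟩ := h
    rw [coeff_leftNormedBracket_eq_coeff_lstar]
    exact Ideal.subset_span ⟨_, rfl⟩
  | zero => exact zero_mem _
  | add _ _ _ _ hx hy => rw [coeff_add, Finsupp.add_apply]; exact add_mem hx hy
  | smul a _ _ hx => rw [coeff_smul_apply, smul_eq_mul]; exact Ideal.mul_mem_left _ a hx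

end

theorem c_eq_gcd_coeffs_lstar_general {A : Type*} (w : List A) (c : ℤ) (hc0 : 0 ≤ c)
    (hgen : ∀ k : ℤ, (∃ Q ∈ freeLie ℤ A, Q.coeff (FreeMonoid.ofList w) = k) ↔ c ∣ k) :
    (lstar ℤ w = 0 → c = 0) ∧
    (lstar ℤ w ≠ 0 → c = Finset.gcd (lstar ℤ w).coeff.support (lstar ℤ w).coeff) := by
  set g := Finset.gcd (lstar ℤ w).coeff.support (lstar ℤ w).coeff
  have hgc : g ∣ c := by
    obtain ⟨Q, hQ, rfl⟩ := (hgen c).mpr dvd_rfl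
    have hspan : Ideal.span (Set.range (lstar ℤ w).coeff) ≤ Ideal.span {g} := by
      rw [Ideal.span_le]
      rintro _ ⟨x, rfl⟩
      exact Ideal.mem_span_singleton.mpr (Finsupp.gcd_support_dvd_apply _ x)
    exact Ideal.mem_span_singleton.mp (hspan (coeff_mem_span_range_coeff_lstar hQ w))
  have hcg : c ∣ g := Finset.dvd_gcd fun x _ => (hgen _).mp
    ⟨leftNormedBracket ℤ x.toList, leftNormedBracket_mem_freeLie _, by
      rw [coeff_leftNormedBracket_eq_coeff_lstar, ofList_toList]⟩
  have hc : c = g :=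
    Int.dvd_antisymm hc0 (Int.nonneg_of_normalize_eq_self Finset.normalize_gcd) hcg hgc
  exact ⟨fun h0 => by simp [hc, g, h0], fun _ => hc⟩

/-- if `c ≥ 0` generates the ideal `{(P,w) : P ∈ L_ℤ(A)}` of `ℤ`, then `c`
is zero (when `l*(w) = 0`) or equals the gcd of the nonzero coefficients of `l*(w)`. -/
theorem c_eq_gcd_coeffs_lstar {A : Type*} [Fintype A] (w : List A) (c : ℤ) (hc0 : 0 ≤ c)
    (hgen : ∀ k : ℤ, (∃ Q ∈ freeLie ℤ A, Q.coeff (FreeMonoid.ofList w) = k) ↔ c ∣ k) :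
    (lstar ℤ w = 0 → c = 0) ∧
    (lstar ℤ w ≠ 0 → c = Finset.gcd (lstar ℤ w).coeff.support (lstar ℤ w).coeff) :=
  c_eq_gcd_coeffs_lstar_general w c hc0 hgen
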